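/- For all integers n, l0, j with 1 ≤ l0 ≤ n−1 and 1 ≤ j ≤ l0+1, the function z^j · Σ_{l=0}^{l0+1} C^{(l)}_{n,l0+1} · P_{n−l}(z) lies in the real linear span of {P_{n+j−l0−1}(z), P_{n+j−l0}(z), …, P_{n+j}(z)}. -/

import Mathlib

open Finset

/-- Pochhammer symbol `(a)_k = a (a+1) ⋯ (a+k-1)`. -/
noncomputable def poch (a : ℝ) (k : ℕ) : ℝ := ∏ i ∈ Finset.range k, (a + (i : ℝ))

/-- The Hendriksen–van Rossum polynomial `P_n(z; α, β)`. -/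
noncomputable def HR (α β : ℝ) (n : ℕ) (z : ℝ) : ℝ :=
  (poch β n / poch (α + 1) n) *
    ∑ k ∈ Finset.range (n + 1),
      poch (-(n : ℝ)) k * poch (α + 1) k /
          (poch (1 - β - (n : ℝ)) k * (Nat.factorial k : ℝ)) * z ^ k

/-- `d_m(α,β) = −(m+β)/(m+α+1)`. -/
noncomputable def dco (α β m : ℝ) : ℝ := -(m + β) / (m + α + 1)

/-- `b_m(α,β) = −m(m+α+β)/((m+α)(m+α+1))`. -/
noncomputable def bco (α β m : ℝ) : ℝ := -(m * (m + α + β)) / ((m + α) * (m + α + 1))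

/-- Connection coefficients `C^{(l)}_{n,j}` (computed with parameters `(α,β)`):
`C^{(0)}_{n,j} = 1`; `C^{(1)}_{n,j} = Σ_{k=0}^{j−1} b_n(α+k, β−k)`;
`C^{(j)}_{n,j} = Π_{k=0}^{j−1} b_{n−k}(α+j−1−k, β−j+1+k)`;
`C^{(l)}_{n,j} = C^{(l)}_{n,j−1} + b_n(α+j−1, β−j+1)·C^{(l−1)}_{n−1,j−1}` for `2 ≤ l ≤ j−1`;
and `0` out of range. Arguments: `Ccoef α β n j l`. -/
noncomputable def Ccoef (α β : ℝ) : ℕ → ℕ → ℕ → ℝ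
  | _, _, 0 => 1
  | n, j, 1 =>
      if 1 ≤ j then ∑ k ∈ Finset.range j, bco (α + (k : ℝ)) (β - (k : ℝ)) (n : ℝ) else 0
  | _, 0, (_ + 2) => 0
  | n, (j + 1), (l + 2) =>
      if l + 2 = j + 1 then
        ∏ k ∈ Finset.range (j + 1),
          bco (α + (j : ℝ) - (k : ℝ)) (β - (j : ℝ) + (k : ℝ)) ((n : ℝ) - (k : ℝ))
      else if l + 2 ≤ j then
        Ccoef α β n j (l + 2)
          + bco (α + (j : ℝ)) (β - (j : ℝ)) (n : ℝ) * Ccoef α β (n - 1) j (l + 1)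
      else 0


/-! The proof rests on two contiguous relations, both checked coefficientwise in `z`:
`P_{m+1}(α+1, β-1) = P_{m+1}(α, β) + b_{m+1}(α, β) P_m(α, β)` and
`z P_n(α+1, β-1) = P_{n+1}(α, β) + d_n(α, β) P_n(α, β)`.
Iterating the first one gives the connection formula
`P_n(α+j, β-j) = Σ_l C^{(l)}_{n,j} P_{n-l}(α, β)`, whose recursion is exactly the one defining
`Ccoef`; so the sum in the theorem is `P_n(α+l0+1, β-l0-1)`. With `s = l0+1-j`, multiplying it by
`z^j` through the second relation lands in the span of `P_n, …, P_{n+j}` taken at parameters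
`(α+s, β-s)`, and `s` more applications of the first relation bring the parameters back to `(α, β)`
while extending the span down to `P_{n-s}`. -/

lemma add_natCast_ne_intCast {a : ℝ} (ha : ∀ q : ℤ, a ≠ q) (m : ℕ) : ∀ q : ℤ, a + m ≠ q :=
  fun q he => ha (q - m) (by push_cast; linarith)

lemma sub_natCast_ne_intCast {a : ℝ} (ha : ∀ q : ℤ, a ≠ q) (m : ℕ) : ∀ q : ℤ, a - m ≠ q :=
  fun q he => ha (q + m) (by push_cast; linarith)

lemma poch_zero (a : ℝ) : poch a 0 = 1 := by simp [poch]

lemma poch_succ (a : ℝ) (k : ℕ) : poch a (k + 1) = poch a k * (a + k) := by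
  simp [poch, Finset.prod_range_succ]

lemma poch_succ' (a : ℝ) (k : ℕ) : poch a (k + 1) = a * poch (a + 1) k := by
  simp only [poch, Finset.prod_range_succ', Nat.cast_zero, add_zero, Nat.cast_succ]
  rw [mul_comm]
  exact congrArg (a * ·) (Finset.prod_congr rfl fun i _ => by ring)

lemma mul_poch_add_one (a : ℝ) (k : ℕ) : a * poch (a + 1) k = poch a k * (a + k) := by
  rw [← poch_succ', poch_succ]

lemma poch_add_one_eq_div {a : ℝ} (ha : a ≠ 0) (k : ℕ) :
    poch (a + 1) k = poch a k * (a + k) / a := by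
  rw [eq_div_iff ha, mul_comm, mul_poch_add_one]

lemma poch_eq_mul_div {a : ℝ} {k : ℕ} (ha : a + k ≠ 0) :
    poch a k = a * poch (a + 1) k / (a + k) := by
  rw [eq_div_iff ha, mul_poch_add_one]

lemma poch_neg_natCast_of_lt {n k : ℕ} (h : n < k) : poch (-(n : ℝ)) k = 0 :=
  Finset.prod_eq_zero (Finset.mem_range.2 h) (by ring)

noncomputable def hrCoeff (α β : ℝ) (n k : ℕ) : ℝ :=
  poch β n / poch (α + 1) n *
    (poch (-(n : ℝ)) k * poch (α + 1) k / (poch (1 - β - (n : ℝ)) k * (k.factorial : ℝ)))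

lemma hrCoeff_of_lt {α β : ℝ} {n k : ℕ} (h : n < k) : hrCoeff α β n k = 0 := by
  simp [hrCoeff, poch_neg_natCast_of_lt h]

lemma HR_eq_sum_hrCoeff (α β : ℝ) {n N : ℕ} (hN : n + 1 ≤ N) (z : ℝ) :
    HR α β n z = ∑ k ∈ Finset.range N, hrCoeff α β n k * z ^ k := by
  rw [← Finset.sum_subset (Finset.range_subset_range.2 hN) fun k _ hk => by
    rw [hrCoeff_of_lt (by simpa using hk), zero_mul], HR, Finset.mul_sum]
  exact Finset.sum_congr rfl fun k _ => by rw [hrCoeff]; ring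

lemma hrCoeff_contiguous {α β : ℝ} (hα : ∀ q : ℤ, α ≠ q) (hβ : ∀ q : ℤ, β ≠ q) (m k : ℕ) :
    hrCoeff (α + 1) (β - 1) (m + 1) k
      = hrCoeff α β (m + 1) k + bco α β ((m + 1 : ℕ) : ℝ) * hrCoeff α β m k := by
  have hm : (m : ℝ) + 1 ≠ 0 := by positivity
  have h1 : α + 1 ≠ 0 := fun he => hα (-1) (by push_cast; linarith)
  have h2 : α + 1 + m ≠ 0 := fun he => hα (-1 - m) (by push_cast; linarith)
  have h3 : α + 1 + 1 + m ≠ 0 := fun he => hα (-2 - m) (by push_cast; linarith)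
  have h4 : 1 - β - (m + 1) + k ≠ 0 := fun he => hβ (k - m) (by push_cast; linarith)
  have h5 : 1 - β - (m + 1) ≠ 0 := fun he => hβ (-m) (by push_cast; linarith)
  have h6 : (m : ℝ) + 1 + α ≠ 0 := fun he => hα (-1 - m) (by push_cast; linarith)
  have h7 : (m : ℝ) + 1 + α + 1 ≠ 0 := fun he => hα (-2 - m) (by push_cast; linarith)
  have e1 : poch (α + 1) m = (α + 1) * poch (α + 1 + 1) m / (α + 1 + m) := poch_eq_mul_div h2
  have e2 : poch (α + 1 + 1) k = poch (α + 1) k * (α + 1 + k) / (α + 1) :=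
    poch_add_one_eq_div h1 k
  have e3 : poch (1 - β - (m + 1)) k
      = (1 - β - (m + 1)) * poch (1 - β - m) k / (1 - β - (m + 1) + k) := by
    rw [poch_eq_mul_div h4]; ring_nf
  have e4 : poch (-(m : ℝ)) k = poch (-(m + 1)) k * (-(m + 1) + k) / (-(m + 1)) := by
    rw [← poch_add_one_eq_div (neg_ne_zero.2 hm)]; ring_nf
  simp only [hrCoeff, bco]
  push_cast
  rw [poch_succ' (β - 1), poch_succ β, poch_succ (α + 1 + 1), poch_succ' (α + 1), e1, e2, e3, e4,
    show β - 1 + 1 = β by ring, show 1 - (β - 1) - ((m : ℝ) + 1) = 1 - β - m by ring]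
  field_simp
  ring

lemma hrCoeff_mul_X {α β : ℝ} (hα : ∀ q : ℤ, α ≠ q) (hβ : ∀ q : ℤ, β ≠ q) (n k : ℕ) :
    hrCoeff α β (n + 1) (k + 1) + dco α β n * hrCoeff α β n (k + 1)
      = hrCoeff (α + 1) (β - 1) n k := by
  have g1 : α + 1 ≠ 0 := fun he => hα (-1) (by push_cast; linarith)
  have g2 : α + 1 + n ≠ 0 := fun he => hα (-1 - n) (by push_cast; linarith)
  have g3 : (n : ℝ) + α + 1 ≠ 0 := fun he => hα (-1 - n) (by push_cast; linarith)
  have g4 : β - 1 + n ≠ 0 := fun he => hβ (1 - n) (by push_cast; linarith)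
  have g5 : 1 - β - n ≠ 0 := fun he => hβ (1 - n) (by push_cast; linarith)
  have g6 : 1 - β - n + k ≠ 0 := fun he => hβ (1 - n + k) (by push_cast; linarith)
  have g7 : -β - n ≠ 0 := fun he => hβ (-n) (by push_cast; linarith)
  have e1 : poch (β - 1) n = (β - 1) * poch β n / (β - 1 + n) := by
    rw [poch_eq_mul_div g4, sub_add_cancel]
  have e2 : poch (α + 1 + 1) n = poch (α + 1) n * (α + 1 + n) / (α + 1) :=
    poch_add_one_eq_div g1 n
  have e3 : poch (1 - β - n) k = (1 - β - n) * poch (2 - β - n) k / (1 - β - n + k) := by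
    rw [poch_eq_mul_div g6]; ring_nf
  have e4 : poch (-β - n) (k + 1) = (-β - n) * poch (1 - β - n) k := by
    rw [poch_succ']; ring_nf
  simp only [hrCoeff, dco]
  push_cast
  rw [poch_succ β, poch_succ (α + 1) n, poch_succ' (-((n : ℝ) + 1)), poch_succ (-(n : ℝ)),
    poch_succ' (α + 1), poch_succ (1 - β - n), Nat.factorial_succ,
    show 1 - β - ((n : ℝ) + 1) = -β - n by ring, show -((n : ℝ) + 1) + 1 = -n by ring,
    show 1 - (β - 1) - (n : ℝ) = 2 - β - n by ring, e4, e1, e2, e3]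
  push_cast
  field_simp
  ring

lemma hrCoeff_mul_X_zero {α : ℝ} (hα : ∀ q : ℤ, α ≠ q) (β : ℝ) (n : ℕ) :
    hrCoeff α β (n + 1) 0 + dco α β n * hrCoeff α β n 0 = 0 := by
  have g2 : α + 1 + n ≠ 0 := fun he => hα (-1 - n) (by push_cast; linarith)
  have g3 : (n : ℝ) + α + 1 ≠ 0 := fun he => hα (-1 - n) (by push_cast; linarith)
  simp only [hrCoeff, dco, poch_zero, poch_succ, Nat.factorial_zero]
  field_simp
  ring

lemma HR_contiguous {α β : ℝ} (hα : ∀ q : ℤ, α ≠ q) (hβ : ∀ q : ℤ, β ≠ q) (m : ℕ) (z : ℝ) :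
    HR (α + 1) (β - 1) (m + 1) z
      = HR α β (m + 1) z + bco α β ((m + 1 : ℕ) : ℝ) * HR α β m z := by
  rw [HR_eq_sum_hrCoeff _ _ le_rfl, HR_eq_sum_hrCoeff α β le_rfl,
    HR_eq_sum_hrCoeff α β (N := m + 2) (by omega), Finset.mul_sum, ← Finset.sum_add_distrib]
  exact Finset.sum_congr rfl fun k _ => by rw [hrCoeff_contiguous hα hβ]; ring

lemma mul_HR {α β : ℝ} (hα : ∀ q : ℤ, α ≠ q) (hβ : ∀ q : ℤ, β ≠ q) (n : ℕ) (z : ℝ) :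
    z * HR (α + 1) (β - 1) n z = HR α β (n + 1) z + dco α β n * HR α β n z := by
  let c (k : ℕ) := hrCoeff α β (n + 1) k + dco α β n * hrCoeff α β n k
  calc z * HR (α + 1) (β - 1) n z
      = ∑ k ∈ Finset.range (n + 1), c (k + 1) * z ^ (k + 1) := by
        rw [HR_eq_sum_hrCoeff _ _ le_rfl, Finset.mul_sum]
        exact Finset.sum_congr rfl fun k _ => by
          rw [show c (k + 1) = _ from hrCoeff_mul_X hα hβ n k, pow_succ]; ring
    _ = ∑ k ∈ Finset.range (n + 2), c k * z ^ k := by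
        rw [Finset.sum_range_succ' _ (n + 1), show c 0 = 0 from hrCoeff_mul_X_zero hα β n,
          zero_mul, add_zero]
    _ = HR α β (n + 1) z + dco α β n * HR α β n z := by
        rw [HR_eq_sum_hrCoeff α β le_rfl, HR_eq_sum_hrCoeff α β (N := n + 2) (by omega),
          Finset.mul_sum, ← Finset.sum_add_distrib]
        exact Finset.sum_congr rfl fun k _ => by ring

section Ccoef

variable (α β : ℝ)

@[simp] lemma Ccoef_zero (n j : ℕ) : Ccoef α β n j 0 = 1 := by
  simp [Ccoef]

lemma Ccoef_of_lt {n j l : ℕ} (h : j < l) : Ccoef α β n j l = 0 := by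
  match j, l with
  | 0, 1 => simp [Ccoef]
  | 0, l + 2 => simp [Ccoef]
  | j + 1, l + 2 => simp only [Ccoef]; rw [if_neg (by omega), if_neg (by omega)]

lemma Ccoef_succ_one (n j : ℕ) :
    Ccoef α β n (j + 1) 1 = Ccoef α β n j 1 + bco (α + j) (β - j) n := by
  rcases j with _ | j
  · simp [Ccoef]
  · simp only [Ccoef, if_pos (Nat.le_add_left 1 _)]
    rw [Finset.sum_range_succ]

lemma Ccoef_diag (n j : ℕ) :
    Ccoef α β n (j + 1) (j + 1) = ∏ k ∈ Finset.range (j + 1),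
      bco (α + (j : ℝ) - (k : ℝ)) (β - (j : ℝ) + (k : ℝ)) ((n : ℝ) - (k : ℝ)) := by
  rcases j with _ | j
  · simp [Ccoef]
  · simp only [Ccoef, if_pos trivial]

lemma Ccoef_succ_diag {n : ℕ} (hn : 1 ≤ n) (j : ℕ) :
    Ccoef α β n (j + 1) (j + 1) = bco (α + j) (β - j) n * Ccoef α β (n - 1) j j := by
  rcases j with _ | j
  · simp [Ccoef_diag]
  rw [Ccoef_diag, Ccoef_diag, Finset.prod_range_succ', mul_comm]
  refine congrArg₂ (· * ·) (by simp) (Finset.prod_congr rfl fun k _ => ?_)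
  push_cast [Nat.cast_sub hn]
  ring_nf

lemma Ccoef_succ_succ {n j l : ℕ} (hn : 1 ≤ n) (hl : l ≤ j) :
    Ccoef α β n (j + 1) (l + 1)
      = Ccoef α β n j (l + 1) + bco (α + j) (β - j) n * Ccoef α β (n - 1) j l := by
  obtain rfl | hl := hl.eq_or_lt
  · rw [Ccoef_succ_diag α β hn, Ccoef_of_lt α β (Nat.lt_succ_self l), zero_add]
  rcases l with _ | l
  · simpa using Ccoef_succ_one α β n j
  obtain ⟨j, rfl⟩ : ∃ i, j = i + 1 := ⟨j - 1, by omega⟩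
  simp only [Ccoef]
  rw [if_neg (by omega), if_pos (by omega)]

end Ccoef

lemma HR_add_sub_eq_sum_Ccoef {α β : ℝ} (hα : ∀ q : ℤ, α ≠ q) (hβ : ∀ q : ℤ, β ≠ q)
    {j n : ℕ} (hjn : j ≤ n) (z : ℝ) :
    HR (α + j) (β - j) n z = ∑ l ∈ Finset.range (j + 1), Ccoef α β n j l * HR α β (n - l) z := by
  induction j generalizing n with
  | zero => simp
  | succ j ih =>
    obtain ⟨m, rfl⟩ : ∃ m, n = m + 1 := ⟨n - 1, by omega⟩
    have hsplit : ∑ l ∈ Finset.range (j + 1), Ccoef α β (m + 1) j l * HR α β (m + 1 - l) z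
        = HR α β (m + 1) z
          + ∑ l ∈ Finset.range (j + 1), Ccoef α β (m + 1) j (l + 1) * HR α β (m - l) z := by
      rw [Finset.sum_range_succ (fun l => Ccoef α β (m + 1) j (l + 1) * HR α β (m - l) z),
        Ccoef_of_lt α β (Nat.lt_succ_self j), zero_mul, add_zero, Finset.sum_range_succ',
        Ccoef_zero, one_mul, add_comm]
      simp
    calc HR (α + ↑(j + 1)) (β - ↑(j + 1)) (m + 1) z
        = HR (α + j) (β - j) (m + 1) z
          + bco (α + j) (β - j) (m + 1 : ℕ) * HR (α + j) (β - j) m z := by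
          rw [← HR_contiguous (add_natCast_ne_intCast hα j) (sub_natCast_ne_intCast hβ j)]
          push_cast; ring_nf
      _ = _ := by
          rw [ih (by omega), ih (by omega), hsplit, Finset.sum_range_succ' _ (j + 1),
            Finset.mul_sum, Ccoef_zero, Nat.sub_zero, one_mul, add_assoc,
            ← Finset.sum_add_distrib, add_comm]
          refine congrArg (· + _) (Finset.sum_congr rfl fun l hl => ?_)
          rw [Ccoef_succ_succ α β (by omega) (Nat.lt_succ_iff.1 (Finset.mem_range.1 hl)),
            Nat.add_sub_cancel, Nat.add_sub_add_right]
          ring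

noncomputable def hrSpan (α β : ℝ) (a b : ℕ) : Submodule ℝ (ℝ → ℝ) :=
  Submodule.span ℝ (HR α β '' ↑(Finset.Icc a b))

lemma HR_mem_hrSpan (α β : ℝ) {a b m : ℕ} (ha : a ≤ m) (hb : m ≤ b) :
    HR α β m ∈ hrSpan α β a b :=
  Submodule.subset_span ⟨m, by simp [ha, hb], rfl⟩

lemma exists_eq_sum_of_mem_hrSpan {α β : ℝ} {a b : ℕ} {f : ℝ → ℝ} (hf : f ∈ hrSpan α β a b) :
    ∃ c : ℕ → ℝ, ∀ z, f z = ∑ m ∈ Finset.Icc a b, c m * HR α β m z := by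
  obtain ⟨c, hc⟩ := (Submodule.mem_span_image_finset_iff_exists_fun' ℝ).1 hf
  exact ⟨c, fun z => by simp [← hc, Finset.sum_apply]⟩

lemma hrSpan_contiguous_le {α β : ℝ} (hα : ∀ q : ℤ, α ≠ q) (hβ : ∀ q : ℤ, β ≠ q) {a : ℕ}
    (ha : 1 ≤ a) (b : ℕ) : hrSpan (α + 1) (β - 1) a b ≤ hrSpan α β (a - 1) b := by
  refine Submodule.span_le.2 ?_
  rintro _ ⟨m, hm, rfl⟩
  obtain ⟨ham, hmb⟩ := Finset.mem_Icc.1 hm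
  obtain ⟨m, rfl⟩ : ∃ k, m = k + 1 := ⟨m - 1, by omega⟩
  have hHR : HR (α + 1) (β - 1) (m + 1) = HR α β (m + 1) + bco α β ((m + 1 : ℕ) : ℝ) • HR α β m :=
    funext (HR_contiguous hα hβ m)
  rw [SetLike.mem_coe, hHR]
  exact add_mem (HR_mem_hrSpan α β (by omega) hmb)
    (Submodule.smul_mem _ _ (HR_mem_hrSpan α β (by omega) (by omega)))

lemma hrSpan_add_sub_le {α β : ℝ} (hα : ∀ q : ℤ, α ≠ q) (hβ : ∀ q : ℤ, β ≠ q) {s a : ℕ}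
    (hs : s ≤ a) (b : ℕ) : hrSpan (α + s) (β - s) a b ≤ hrSpan α β (a - s) b := by
  induction s generalizing a with
  | zero => simp
  | succ s ih =>
    calc hrSpan (α + ↑(s + 1)) (β - ↑(s + 1)) a b
        = hrSpan (α + s + 1) (β - s - 1) a b := by push_cast; ring_nf
      _ ≤ hrSpan (α + s) (β - s) (a - 1) b :=
          hrSpan_contiguous_le (add_natCast_ne_intCast hα s) (sub_natCast_ne_intCast hβ s)
            (by omega) b
      _ ≤ hrSpan α β (a - (s + 1)) b := by
          rw [← Nat.sub_sub, Nat.sub_right_comm]; exact ih (by omega)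

lemma mul_mem_hrSpan {α β : ℝ} (hα : ∀ q : ℤ, α ≠ q) (hβ : ∀ q : ℤ, β ≠ q) {a b : ℕ}
    {f : ℝ → ℝ} (hf : f ∈ hrSpan (α + 1) (β - 1) a b) :
    (fun z => z * f z) ∈ hrSpan α β a (b + 1) := by
  suffices h : (hrSpan (α + 1) (β - 1) a b).map (LinearMap.mulLeft ℝ id) ≤ hrSpan α β a (b + 1) from
    h (Submodule.mem_map_of_mem hf)
  refine (Submodule.map_span_le _ _ _).2 ?_
  rintro _ ⟨m, hm, rfl⟩
  obtain ⟨ham, hmb⟩ := Finset.mem_Icc.1 hm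
  have hHR : LinearMap.mulLeft ℝ id (HR (α + 1) (β - 1) m)
      = HR α β (m + 1) + dco α β m • HR α β m :=
    funext (mul_HR hα hβ m)
  rw [hHR]
  exact add_mem (HR_mem_hrSpan α β (by omega) (by omega))
    (Submodule.smul_mem _ _ (HR_mem_hrSpan α β ham (by omega)))

lemma pow_mul_mem_hrSpan {α β : ℝ} (hα : ∀ q : ℤ, α ≠ q) (hβ : ∀ q : ℤ, β ≠ q) {a b j : ℕ}
    {f : ℝ → ℝ} (hf : f ∈ hrSpan (α + j) (β - j) a b) :
    (fun z => z ^ j * f z) ∈ hrSpan α β a (b + j) := by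
  induction j generalizing b f with
  | zero => simpa using hf
  | succ j ih =>
    have hf' : f ∈ hrSpan (α + j + 1) (β - j - 1) a b := by
      convert hf using 2 <;> push_cast <;> ring
    have := ih (mul_mem_hrSpan (add_natCast_ne_intCast hα j) (sub_natCast_ne_intCast hβ j) hf')
    rw [add_right_comm, add_assoc] at this
    simpa only [pow_succ, mul_assoc] using this

theorem stmt14_general (α β : ℝ)
    (hα : ∀ m : ℤ, α ≠ (m : ℝ)) (hβ : ∀ m : ℤ, β ≠ (m : ℝ))
    (n l0 j : ℕ) (hln : l0 + 1 ≤ n) (hj : j ≤ l0 + 1) :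
    ∃ c : ℕ → ℝ, ∀ z : ℝ,
      z ^ j * ∑ l ∈ Finset.range (l0 + 2), Ccoef α β n (l0 + 1) l * HR α β (n - l) z
        = ∑ m ∈ Finset.Icc (n + j - (l0 + 1)) (n + j), c m * HR α β m z := by
  set s := l0 + 1 - j
  have hsj : (s : ℝ) + j = ↑(l0 + 1) := by rw [← Nat.cast_add, Nat.sub_add_cancel hj]
  have hconn (z : ℝ) : ∑ l ∈ Finset.range (l0 + 2), Ccoef α β n (l0 + 1) l * HR α β (n - l) z
      = HR (α + s + j) (β - s - j) n z := by
    rw [add_assoc, sub_sub, hsj, HR_add_sub_eq_sum_Ccoef hα hβ hln z]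
  have hmem := hrSpan_add_sub_le hα hβ (s := s) (by omega) (n + j)
    (pow_mul_mem_hrSpan (add_natCast_ne_intCast hα s) (sub_natCast_ne_intCast hβ s)
      (HR_mem_hrSpan _ _ le_rfl le_rfl))
  rw [show n - s = n + j - (l0 + 1) by omega] at hmem
  simpa only [hconn] using exists_eq_sum_of_mem_hrSpan hmem

/-- For `1 ≤ l0 ≤ n−1` and `1 ≤ j ≤ l0+1`, the function
`z^j · Σ_{l=0}^{l0+1} C^{(l)}_{n,l0+1} P_{n−l}(z)` lies in the span of
`{P_{n+j−l0−1}, …, P_{n+j}}`. -/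
theorem stmt14 (α β : ℝ)
    (hα : ∀ m : ℤ, α ≠ (m : ℝ)) (hβ : ∀ m : ℤ, β ≠ (m : ℝ))
    (hαβ : ∀ m : ℤ, α + β ≠ (m : ℝ))
    (n l0 j : ℕ) (hl0 : 1 ≤ l0) (hln : l0 + 1 ≤ n) (hj1 : 1 ≤ j) (hj : j ≤ l0 + 1) :
    ∃ c : ℕ → ℝ, ∀ z : ℝ,
      z ^ j * ∑ l ∈ Finset.range (l0 + 2), Ccoef α β n (l0 + 1) l * HR α β (n - l) z
        = ∑ m ∈ Finset.Icc (n + j - (l0 + 1)) (n + j), c m * HR α β m z :=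
  stmt14_general α β hα hβ n l0 j hln hj
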